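/- Let V be an ordered normed space satisfying (O.p.1), 1 ≤ p < ∞, in which ⊥_p is additive on V⁺, and let U ⊆ V⁺ be a p-orthonormal set. Then for distinct u₁, …, uₙ ∈ U and scalars α₁, …, αₙ, the combination ∑ αᵢ uᵢ lies in V⁺ if and only if all αᵢ ≥ 0. -/

import Mathlib

/-!
Suppose `x = ∑ αᵢ uᵢ ≥ 0` but `αⱼ < 0`. Replacing every other coefficient by its positive part
gives `y = αⱼ uⱼ + z ≥ x ≥ 0` with `z = ∑_{i ≠ j} αᵢ⁺ uᵢ`, and additivity of `⊥_p` on the cone makes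
`uⱼ ⊥_p z`. Then `0 ≤ y ≤ z`, so (O.p.1) gives `‖y‖ ^ p ≤ ‖z‖ ^ p`, while orthogonality gives
`‖y‖ ^ p = |αⱼ| ^ p + ‖z‖ ^ p`.
-/

/-- `x ⊥_p y`: `‖x + k • y‖ ^ p = ‖x‖ ^ p + ‖k • y‖ ^ p` for all `k : ℝ`. -/
def PerpP {X : Type*} [NormedAddCommGroup X] [NormedSpace ℝ X] (p : ℝ) (x y : X) : Prop :=
  ∀ k : ℝ, ‖x + k • y‖ ^ p = ‖x‖ ^ p + ‖k • y‖ ^ p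

open Finset

section PerpP

variable {X : Type*} [NormedAddCommGroup X] [NormedSpace ℝ X] {p : ℝ} {x y : X}

theorem perpP_zero_right (hp : p ≠ 0) (x : X) : PerpP p x 0 := fun k => by
  simp [Real.zero_rpow hp]

theorem PerpP.smul_right (h : PerpP p x y) (c : ℝ) : PerpP p x (c • y) := fun k => by
  simpa [mul_smul] using h (k * c)

theorem PerpP.norm_smul_add_rpow (h : PerpP p x y) {a : ℝ} (ha : a ≠ 0) :
    ‖a • x + y‖ ^ p = |a| ^ p * ‖x‖ ^ p + ‖y‖ ^ p := by
  have hscale : a • x + y = a • (x + a⁻¹ • y) := by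
    rw [smul_add, smul_inv_smul₀ ha]
  rw [hscale, norm_smul, Real.norm_eq_abs, Real.mul_rpow (abs_nonneg a) (norm_nonneg _), h,
    norm_smul, Real.norm_eq_abs, Real.mul_rpow (abs_nonneg _) (norm_nonneg _), mul_add,
    ← mul_assoc, ← Real.mul_rpow (abs_nonneg _) (abs_nonneg _), ← abs_mul, mul_inv_cancel₀ ha,
    abs_one, Real.one_rpow, one_mul]

end PerpP

section PointedCone

variable {V : Type*} [NormedAddCommGroup V] [NormedSpace ℝ V] {p : ℝ} (K : PointedCone ℝ V)

theorem perpP_sum_right_of_mem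
    (hadd : ∀ a b c : V, a ∈ K → b ∈ K → c ∈ K → PerpP p a b → PerpP p a c → PerpP p a (b + c))
    (hp : p ≠ 0) {ι : Type*} {s : Finset ι} {x : V} {f : ι → V} (hx : x ∈ K)
    (hf : ∀ i ∈ s, f i ∈ K ∧ PerpP p x (f i)) : PerpP p x (∑ i ∈ s, f i) :=
  (Finset.sum_induction f (fun v => v ∈ K ∧ PerpP p x v)
    (fun _ _ ha hb => ⟨K.add_mem ha.1 hb.1, hadd _ _ _ hx ha.1 hb.1 ha.2 hb.2⟩)
    ⟨K.zero_mem, perpP_zero_right hp x⟩ hf).2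

theorem nonneg_of_smul_add_mem
    (hOp1 : ∀ u v w : V, v - u ∈ K → w - v ∈ K → ‖v‖ ^ p ≤ ‖u‖ ^ p + ‖w‖ ^ p)
    (hp : p ≠ 0) {u z : V} (hu : u ∈ K) (hu0 : u ≠ 0) (hperp : PerpP p u z) {a : ℝ}
    (h : a • u + z ∈ K) : 0 ≤ a := by
  by_contra! ha
  have hle : ‖a • u + z‖ ^ p ≤ ‖z‖ ^ p := by
    have := hOp1 0 (a • u + z) z (by simpa using h)
      (by simpa [← neg_smul] using K.smul_mem (neg_nonneg.2 ha.le) hu)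
    rwa [norm_zero, Real.zero_rpow hp, zero_add] at this
  have hpos : 0 < |a| ^ p * ‖u‖ ^ p :=
    mul_pos (Real.rpow_pos_of_pos (abs_pos.2 ha.ne) p)
      (Real.rpow_pos_of_pos (norm_pos_iff.2 hu0) p)
  rw [hperp.norm_smul_add_rpow ha.ne] at hle
  linarith

theorem sum_smul_mem_iff_nonneg
    (hOp1 : ∀ u v w : V, v - u ∈ K → w - v ∈ K → ‖v‖ ^ p ≤ ‖u‖ ^ p + ‖w‖ ^ p)
    (hadd : ∀ a b c : V, a ∈ K → b ∈ K → c ∈ K → PerpP p a b → PerpP p a c → PerpP p a (b + c))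
    (hp : p ≠ 0) {ι : Type*} [Fintype ι] [DecidableEq ι] {u : ι → V} (huK : ∀ i, u i ∈ K)
    (hu0 : ∀ i, u i ≠ 0) (hperp : Pairwise fun i j => PerpP p (u i) (u j)) (α : ι → ℝ) :
    ∑ i, α i • u i ∈ K ↔ ∀ i, 0 ≤ α i := by
  refine ⟨fun hx j => ?_, fun h => K.sum_mem fun i _ => K.smul_mem (h i) (huK i)⟩
  set z := ∑ i ∈ univ.erase j, max (α i) 0 • u i
  have hz : PerpP p (u j) z := perpP_sum_right_of_mem K hadd hp (huK j) fun i hi =>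
    ⟨K.smul_mem (le_max_right _ _) (huK i), (hperp (ne_of_mem_erase hi).symm).smul_right _⟩
  have hmem : α j • u j + z ∈ K := by
    have hsplit : α j • u j + z =
        ∑ i, α i • u i + ∑ i ∈ univ.erase j, (max (α i) 0 - α i) • u i := by
      rw [← add_sum_erase _ _ (mem_univ j), add_assoc, ← sum_add_distrib]
      simp only [← add_smul, add_sub_cancel]
      rfl
    rw [hsplit]
    exact K.add_mem hx (K.sum_mem fun i _ => K.smul_mem (sub_nonneg.2 (le_max_left _ _)) (huK i))
  exact nonneg_of_smul_add_mem K hOp1 hp (huK j) (hu0 j) hz hmem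

end PointedCone

theorem stmt8_general {V : Type*} [NormedAddCommGroup V] [NormedSpace ℝ V] (C : Set V)
    -- `C` is a norm-closed, proper, generating cone:
    (hCadd : ∀ x ∈ C, ∀ y ∈ C, x + y ∈ C)
    (hCsmul : ∀ x ∈ C, ∀ r : ℝ, 0 ≤ r → r • x ∈ C)
    (hCgen : ∀ x : V, ∃ y ∈ C, ∃ z ∈ C, x = y - z)
    (p : ℝ) (hp : 1 ≤ p)
    -- (O.p.1):
    (hOp1 : ∀ u v w : V, v - u ∈ C → w - v ∈ C → ‖v‖ ^ p ≤ ‖u‖ ^ p + ‖w‖ ^ p)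
    -- `⊥_p` is additive on `V⁺`:
    (hadd : ∀ a b c : V, a ∈ C → b ∈ C → c ∈ C →
      PerpP p a b → PerpP p a c → PerpP p a (b + c))
    -- `U ⊆ V⁺` is a `p`-orthonormal set:
    (U : Set V) (hUC : U ⊆ C)
    (hUnorm : ∀ u ∈ U, ‖u‖ = 1)
    (hUorth : ∀ x ∈ U, ∀ y ∈ U, x ≠ y → PerpP p x y)
    (n : ℕ) (u : Fin n → V) (hu : ∀ i, u i ∈ U) (huinj : Function.Injective u)
    (α : Fin n → ℝ) :
    (∑ i, α i • u i) ∈ C ↔ ∀ i, 0 ≤ α i := by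
  have h0C : (0 : V) ∈ C := by
    obtain ⟨y, hy, -⟩ := hCgen 0
    simpa using hCsmul y hy 0 le_rfl
  let K : PointedCone ℝ V :=
    { carrier := C
      add_mem' := fun hx hy => hCadd _ hx _ hy
      zero_mem' := h0C
      smul_mem' := fun c x hx => hCsmul x hx c c.2 }
  exact sum_smul_mem_iff_nonneg K hOp1 hadd (by linarith) (fun i => hUC (hu i))
    (fun i => norm_ne_zero_iff.1 (by simp [hUnorm _ (hu i)]))
    (fun i j hij => hUorth _ (hu i) _ (hu j) (huinj.ne hij)) α

theorem stmt8 {V : Type*} [NormedAddCommGroup V] [NormedSpace ℝ V] (C : Set V)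
    -- `C` is a norm-closed, proper, generating cone:
    (hCadd : ∀ x ∈ C, ∀ y ∈ C, x + y ∈ C)
    (hCsmul : ∀ x ∈ C, ∀ r : ℝ, 0 ≤ r → r • x ∈ C)
    (hCproper : ∀ x, x ∈ C → -x ∈ C → x = 0)
    (hCgen : ∀ x : V, ∃ y ∈ C, ∃ z ∈ C, x = y - z)
    (hCclosed : IsClosed C)
    (p : ℝ) (hp : 1 ≤ p)
    -- (O.p.1):
    (hOp1 : ∀ u v w : V, v - u ∈ C → w - v ∈ C → ‖v‖ ^ p ≤ ‖u‖ ^ p + ‖w‖ ^ p)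
    -- `⊥_p` is additive on `V⁺`:
    (hadd : ∀ a b c : V, a ∈ C → b ∈ C → c ∈ C →
      PerpP p a b → PerpP p a c → PerpP p a (b + c))
    -- `U ⊆ V⁺` is a `p`-orthonormal set:
    (U : Set V) (hUC : U ⊆ C)
    (hUnorm : ∀ u ∈ U, ‖u‖ = 1)
    (hUorth : ∀ x ∈ U, ∀ y ∈ U, x ≠ y → PerpP p x y)
    (n : ℕ) (u : Fin n → V) (hu : ∀ i, u i ∈ U) (huinj : Function.Injective u)
    (α : Fin n → ℝ) :
    (∑ i, α i • u i) ∈ C ↔ ∀ i, 0 ≤ α i :=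
  stmt8_general C hCadd hCsmul hCgen p hp hOp1 hadd U hUC hUnorm hUorth n u hu huinj α
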